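/- arXiv:cs/0312014 — 4 statements merged into one kernel-verified Lean document; each statement's English description precedes it below -/
import Mathlib

section
/- For every 3-valued structure S that is an ICA and every 2-valued structure S♮ such that S♮ ⊨ F and S is the canonical abstraction of S♮, S♮ satisfies τ^S. -/
/-!
Common framework: 2-valued and 3-valued logical structures over a relational
vocabulary with a designated binary equality predicate, embedding, first-order
formulas with transitive closure and their Tarskian semantics, characteristic
formulas, canonical abstraction.
-/

namespace HeapAbs

/-- The three truth values 0, 1/2, 1. -/
inductive TV : Type
  | zero
  | half
  | one
  deriving DecidableEq

/-- Information order on truth values: `l1 ⊑ l2` iff `l1 = l2` or `l2 = 1/2`. -/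
def TV.le (a b : TV) : Prop := a = b ∨ b = TV.half

/-- `v` is the least upper bound (join) of the set `A` in the information order. -/
def TV.IsJoin (A : Set TV) (v : TV) : Prop :=
  (∀ a ∈ A, TV.le a v) ∧ ∀ w, (∀ a ∈ A, TV.le a w) → TV.le v w

/-- A (relational) vocabulary: a set of predicate symbols with arities and a
designated binary equality symbol. -/
structure Voc : Type 1 where
  rel : Type
  ar : rel → ℕ
  eqr : rel
  eq_ar : ar eqr = 2

/-- The pair `(u, v)` as a tuple (used for binary predicates). -/
def pair {α : Type _} {n : ℕ} (u v : α) : Fin n → α :=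
  fun i => if (i : ℕ) = 0 then u else v

/-- A 3-valued logical structure over the vocabulary `σ`. -/
structure Str3 (σ : Voc) : Type 1 where
  U : Type
  ι : (r : σ.rel) → (Fin (σ.ar r) → U) → TV
  eq_refl : ∀ u : U, ι σ.eqr (pair u u) ≠ TV.zero
  eq_ne : ∀ u v : U, u ≠ v → ι σ.eqr (pair u v) = TV.zero

/-- A 2-valued logical structure over `σ`: all predicate values are definite and
the equality symbol is interpreted as true equality. -/
structure Str2 (σ : Voc) : Type 1 where
  U : Type
  ι : (r : σ.rel) → (Fin (σ.ar r) → U) → Bool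
  eq_iff : ∀ u v : U, ι σ.eqr (pair u v) = true ↔ u = v

/-- The value of a predicate of a 2-valued structure, seen as a truth value. -/
def Str2.tv {σ : Voc} (C : Str2 σ) (r : σ.rel) (t : Fin (σ.ar r) → C.U) : TV :=
  if C.ι r t then TV.one else TV.zero

/-- `f` embeds the 2-valued structure `C` into the 3-valued structure `S`:
`f` is surjective and every predicate value of `C` is ⊑ the corresponding
value of `S`. -/
def Embeds {σ : Voc} (C : Str2 σ) (S : Str3 σ) (f : C.U → S.U) : Prop :=
  Function.Surjective f ∧
    ∀ (r : σ.rel) (t : Fin (σ.ar r) → C.U), TV.le (C.tv r t) (S.ι r (f ∘ t))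

/-- First-order formulas with transitive closure over vocabulary `σ`, with
free variables drawn from `V`. -/
inductive Fml (σ : Voc) : Type → Type 1 where
  | tru {V : Type} : Fml σ V
  | atom {V : Type} (r : σ.rel) (ts : Fin (σ.ar r) → V) : Fml σ V
  | not {V : Type} : Fml σ V → Fml σ V
  | or {V : Type} : Fml σ V → Fml σ V → Fml σ V
  | ex {V : Type} : Fml σ (Option V) → Fml σ V
  | tc {V : Type} (φ : Fml σ (Option (Option V))) (a b : V) : Fml σ V

/-- Tarskian satisfaction of a formula in a 2-valued structure under an
assignment `ρ` of the free variables. -/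
def Str2.Sat {σ : Voc} (C : Str2 σ) : {V : Type} → (V → C.U) → Fml σ V → Prop
  | _, _, .tru => True
  | _, ρ, .atom r ts => C.ι r (ρ ∘ ts) = true
  | _, ρ, .not φ => ¬ C.Sat ρ φ
  | _, ρ, .or φ ψ => C.Sat ρ φ ∨ C.Sat ρ ψ
  | _, ρ, .ex φ => ∃ m : C.U, C.Sat (fun v => Option.elim v m ρ) φ
  | _, ρ, .tc φ a b =>
      Relation.TransGen
        (fun x y => C.Sat (fun v => Option.elim v y (fun v' => Option.elim v' x ρ)) φ)
        (ρ a) (ρ b)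

/-- Satisfaction of a closed formula. -/
def SatC {σ : Voc} (C : Str2 σ) (φ : Fml σ Empty) : Prop :=
  C.Sat (fun x => x.elim) φ

namespace Fml

def fls {σ : Voc} {V : Type} : Fml σ V := .not .tru

def and {σ : Voc} {V : Type} (φ ψ : Fml σ V) : Fml σ V := .not (.or (.not φ) (.not ψ))

def imp {σ : Voc} {V : Type} (φ ψ : Fml σ V) : Fml σ V := .or (.not φ) ψ

def all {σ : Voc} {V : Type} (φ : Fml σ (Option V)) : Fml σ V := .not (.ex (.not φ))

def conj {σ : Voc} {V : Type} (l : List (Fml σ V)) : Fml σ V := l.foldr .and .tru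

def disj {σ : Voc} {V : Type} (l : List (Fml σ V)) : Fml σ V := l.foldr .or .fls

/-- Renaming of free variables. -/
def map {σ : Voc} : {V W : Type} → (V → W) → Fml σ V → Fml σ W
  | _, _, _, .tru => .tru
  | _, _, g, .atom r ts => .atom r (g ∘ ts)
  | _, _, g, .not φ => .not (φ.map g)
  | _, _, g, .or φ ψ => .or (φ.map g) (ψ.map g)
  | _, _, g, .ex φ => .ex (φ.map (Option.map g))
  | _, _, g, .tc φ a b => .tc (φ.map (Option.map (Option.map g))) (g a) (g b)

end Fml

/-- The characteristic formula `p^B` of the truth value `B` for the predicate `p`: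
`p^0 := ¬p`, `p^1 := p`, `p^{1/2} := true`. -/
def charFml {σ : Voc} {V : Type} (p : σ.rel) (ts : Fin (σ.ar p) → V) : TV → Fml σ V
  | TV.zero => .not (.atom p ts)
  | TV.one => .atom p ts
  | TV.half => .tru

/-- `node` is a family of node formulas (one per node of `S`, with a single free
variable `w`) witnessing that `S` is FO-identifiable: for every 2-valued `C`
embedding into `S` via `f` and every concrete node `uh`, `f uh = u` iff `C`
satisfies `node u` under `[w ↦ uh]`. -/
def IsNodeFamily {σ : Voc} (S : Str3 σ) (node : S.U → Fml σ Unit) : Prop :=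
  ∀ (C : Str2 σ) (f : C.U → S.U), Embeds C S f →
    ∀ (uh : C.U) (u : S.U), f uh = u ↔ C.Sat (fun _ => uh) (node u)

/-- `S` is FO-identifiable. -/
def FOIdentifiable {σ : Voc} (S : Str3 σ) : Prop :=
  ∃ node : S.U → Fml σ Unit, IsNodeFamily S node

/-- Mutual exclusivity of a family of node formulas: in every 2-valued structure
that embeds into `S`, every concrete node satisfies at most one node formula. -/
def MutExcl {σ : Voc} (S : Str3 σ) (node : S.U → Fml σ Unit) : Prop :=
  ∀ C : Str2 σ, (∃ f : C.U → S.U, Embeds C S f) →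
    ∀ (uh : C.U) (u1 u2 : S.U), u1 ≠ u2 →
      ¬ (C.Sat (fun _ => uh) (node u1) ∧ C.Sat (fun _ => uh) (node u2))

/-- `S` is a bounded structure: any two distinct nodes are distinguished by a
unary predicate having distinct definite values on them. -/
def Bounded {σ : Voc} (S : Str3 σ) : Prop :=
  ∀ u1 u2 : S.U, u1 ≠ u2 →
    ∃ p : σ.rel, σ.ar p = 1 ∧
      S.ι p (fun _ => u1) ≠ S.ι p (fun _ => u2) ∧
      S.ι p (fun _ => u1) ≠ TV.half ∧ S.ι p (fun _ => u2) ≠ TV.half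

/-- The node formula `node^S_u(w) := ⋀_{p unary} p^{ι^S(p)(u)}(w)`. -/
noncomputable def boundedNode {σ : Voc} [Fintype σ.rel] (S : Str3 σ) (u : S.U) : Fml σ Unit :=
  Fml.conj
    (((Finset.univ : Finset {p : σ.rel // σ.ar p = 1}).toList).map
      (fun p => charFml p.1 (fun _ => ()) (S.ι p.1 (fun _ => u))))

/-- The conjunction `⋀_j node_{t j}(w_j)` over the components of a tuple of
abstract nodes, as a formula with free variables `w_1, …, w_n`. -/
def nodeTuple {σ : Voc} (S : Str3 σ) (node : S.U → Fml σ Unit) {n : ℕ}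
    (t : Fin n → S.U) : Fml σ (Fin n) :=
  Fml.conj (List.ofFn fun j : Fin n => (node (t j)).map (fun _ => j))

/-- Universal closure of a formula with `n` free variables. -/
def closeAll {σ : Voc} : {n : ℕ} → Fml σ (Fin n) → Fml σ Empty
  | 0, φ => φ.map Fin.elim0
  | _ + 1, φ =>
      closeAll (Fml.all (φ.map (fun i => Fin.lastCases none (fun j => some j) i)))

/-- Existential closure of a formula with `n` free variables. -/
def closeEx {σ : Voc} : {n : ℕ} → Fml σ (Fin n) → Fml σ Empty
  | 0, φ => φ.map Fin.elim0
  | _ + 1, φ =>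
      closeEx (Fml.ex (φ.map (fun i => Fin.lastCases none (fun j => some j) i)))

/-- `∃ v : node_u(v)`. -/
noncomputable def existsNode {σ : Voc} (S : Str3 σ) (node : S.U → Fml σ Unit) (u : S.U) :
    Fml σ Empty :=
  .ex ((node u).map (fun _ => (none : Option Empty)))

/-- The totality formula `∀ w : ⋁_i node_{u_i}(w)`. -/
noncomputable def xiTotal {σ : Voc} (S : Str3 σ) [Fintype S.U] (node : S.U → Fml σ Unit) :
    Fml σ Empty :=
  Fml.all (Fml.disj
    (((Finset.univ : Finset S.U).toList).map
      (fun u => (node u).map (fun _ => (none : Option Empty)))))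

/-- The nullary characteristic formula `⋀_{p nullary} p^{ι^S(p)()}`. -/
noncomputable def xiNullary {σ : Voc} [Fintype σ.rel] (S : Str3 σ) : Fml σ Empty :=
  Fml.conj
    (((Finset.univ : Finset σ.rel).toList).map (fun p =>
      if h : σ.ar p = 0 then
        charFml p (fun i => Fin.elim0 (Fin.cast h i))
          (S.ι p (fun i => Fin.elim0 (Fin.cast h i)))
      else .tru))

/-- The predicate characteristic formula
`∀ w1 … wr : ⋀_{tuples ū} ((⋀_j node_{ū j}(w_j)) → p^{ι^S(p)(ū)}(w̄))`. -/
noncomputable def xiPred {σ : Voc} (S : Str3 σ) [Fintype S.U] (node : S.U → Fml σ Unit)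
    (p : σ.rel) : Fml σ Empty :=
  closeAll (Fml.conj
    (((Finset.univ : Finset (Fin (σ.ar p) → S.U)).toList).map
      (fun t => Fml.imp (nodeTuple S node t)
        (charFml p (fun j => j) (S.ι p t)))))

/-- Conjunction of the predicate characteristic formulas over all predicates of
arity ≥ 1. -/
noncomputable def xiPredAll {σ : Voc} [Fintype σ.rel] (S : Str3 σ) [Fintype S.U]
    (node : S.U → Fml σ Unit) : Fml σ Empty :=
  Fml.conj
    (((Finset.univ : Finset σ.rel).toList).map (fun p =>
      if σ.ar p = 0 then .tru else xiPred S node p))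

/-- The first-order characteristic formula `ξ^S` of `S` (w.r.t. the node
formulas `node`). -/
noncomputable def xi {σ : Voc} [Fintype σ.rel] (S : Str3 σ) [Fintype S.U]
    (node : S.U → Fml σ Unit) : Fml σ Empty :=
  (Fml.conj (((Finset.univ : Finset S.U).toList).map (existsNode S node))).and
    ((xiTotal S node).and ((xiNullary S).and (xiPredAll S node)))

/-- The concretization `γ(S)`: the 2-valued structures that embed into `S` and
satisfy the integrity formula `F`. -/
def gammaSet {σ : Voc} (F : Fml σ Empty) (S : Str3 σ) : Set (Str2 σ) :=
  {C | (∃ f : C.U → S.U, Embeds C S f) ∧ SatC C F}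

/-- `S` is the canonical abstraction of the 2-valued structure `C` via `blur`:
`blur` is a surjective embedding that identifies exactly the concrete nodes with
equal canonical names (the values of the unary predicates), and every abstract
predicate value is the join of the concrete values it represents. -/
def IsCanonAbs {σ : Voc} (C : Str2 σ) (S : Str3 σ) (blur : C.U → S.U) : Prop :=
  Embeds C S blur ∧
    (∀ u v : C.U, blur u = blur v ↔
      ∀ p : σ.rel, σ.ar p = 1 → C.ι p (fun _ => u) = C.ι p (fun _ => v)) ∧
    ∀ (p : σ.rel) (t' : Fin (σ.ar p) → S.U),
      TV.IsJoin {b | ∃ t : Fin (σ.ar p) → C.U, blur ∘ t = t' ∧ C.tv p t = b}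
        (S.ι p t')

/-- `S` is an image of canonical abstraction. -/
def ICA {σ : Voc} (S : Str3 σ) : Prop :=
  ∃ (C : Str2 σ) (blur : C.U → S.U), IsCanonAbs C S blur

/-- The concretization of `S` under canonical abstraction. -/
def gammaC {σ : Voc} (F : Fml σ Empty) (S : Str3 σ) : Set (Str2 σ) :=
  {C | (∃ blur : C.U → S.U, IsCanonAbs C S blur) ∧ SatC C F}

/-- `node` is a family of node formulas witnessing canonical-FO-identifiability
of `S`. -/
def IsCanonNodeFamily {σ : Voc} (S : Str3 σ) (node : S.U → Fml σ Unit) : Prop :=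
  ∀ (C : Str2 σ) (blur : C.U → S.U), IsCanonAbs C S blur →
    ∀ (uh : C.U) (u : S.U), blur uh = u ↔ C.Sat (fun _ => uh) (node u)

/-- `τ^S[p]`: for every tuple where `p` has value 1/2, there are concrete
tuples (satisfying the node formulas) on which `p` holds, resp., fails. -/
noncomputable def tauPred {σ : Voc} (S : Str3 σ) [Fintype S.U] (node : S.U → Fml σ Unit)
    (p : σ.rel) : Fml σ Empty :=
  Fml.conj
    (((((Finset.univ : Finset (Fin (σ.ar p) → S.U)).toList).filter
        (fun t => decide (S.ι p t = TV.half))).map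
      (fun t =>
        (closeEx ((nodeTuple S node t).and (.atom p (fun j => j)))).and
          (closeEx ((nodeTuple S node t).and (.not (.atom p (fun j => j))))))))

/-- `τ^S := ξ^S ∧ ⋀_{p of arity ≥ 2} τ^S[p]`. -/
noncomputable def tau {σ : Voc} [Fintype σ.rel] (S : Str3 σ) [Fintype S.U]
    (node : S.U → Fml σ Unit) : Fml σ Empty :=
  (xi S node).and
    (Fml.conj (((Finset.univ : Finset σ.rel).toList).map (fun p =>
      if 2 ≤ σ.ar p then tauPred S node p else .tru)))

/-- Isomorphism of 3-valued structures. -/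
def Iso3 {σ : Voc} (S1 S2 : Str3 σ) : Prop :=
  ∃ e : S1.U ≃ S2.U,
    ∀ (p : σ.rel) (t : Fin (σ.ar p) → S1.U), S1.ι p t = S2.ι p (e ∘ t)

/-- Satisfaction of the NP (existential monadic second-order) characteristic
formula `ψ^S` of `S` in the 2-valued structure `C`: there exist sets `V_u`
(one per node `u` of `S`) that are nonempty, pairwise disjoint, and cover `C`,
such that the nullary and the predicate characteristic conjuncts hold with
`node_{u}(w) := w ∈ V_u`. -/
def SatNP {σ : Voc} (S : Str3 σ) (C : Str2 σ) : Prop :=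
  ∃ V : S.U → Set C.U,
    (∀ u : S.U, ∃ w, w ∈ V u) ∧
    (∀ u1 u2 : S.U, u1 ≠ u2 →
      ∀ w1 ∈ V u1, ∀ w2 ∈ V u2, ¬ C.ι σ.eqr (pair w1 w2) = true) ∧
    (∀ w : C.U, ∃ u : S.U, w ∈ V u) ∧
    (∀ (p : σ.rel) (h : σ.ar p = 0),
      TV.le (C.tv p (fun i => Fin.elim0 (Fin.cast h i)))
        (S.ι p (fun i => Fin.elim0 (Fin.cast h i)))) ∧
    (∀ (p : σ.rel), 1 ≤ σ.ar p →
      ∀ (t : Fin (σ.ar p) → C.U) (us : Fin (σ.ar p) → S.U),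
        (∀ j, t j ∈ V (us j)) → TV.le (C.tv p t) (S.ι p us))


/-! ### Auxiliary lemmas -/

section Aux

variable {σ : Voc}

lemma TV.le_refl' (a : TV) : TV.le a a := Or.inl rfl

lemma TV.le_antisymm' {a b : TV} (h1 : TV.le a b) (h2 : TV.le b a) : a = b := by
  rcases h1 with h1 | h1
  · exact h1
  · rcases h2 with h2 | h2
    · exact h2.symm
    · rw [h1, h2]

lemma tv_ne_half (C : Str2 σ) (p : σ.rel) (t : Fin (σ.ar p) → C.U) :
    C.tv p t ≠ TV.half := by
  unfold Str2.tv; split <;> simp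

lemma sat_map (C : Str2 σ) : ∀ {V : Type} (φ : Fml σ V) {W : Type} (g : V → W)
    (ρ : W → C.U), C.Sat ρ (φ.map g) ↔ C.Sat (ρ ∘ g) φ := by
  intro V φ
  induction φ with
  | tru => intro W g ρ; simp [Fml.map, Str2.Sat]
  | atom r ts =>
      intro W g ρ
      simp only [Fml.map, Str2.Sat]
      rw [Function.comp_assoc]
  | not φ ih => intro W g ρ; simp only [Fml.map, Str2.Sat]; rw [ih]
  | or φ ψ ih1 ih2 => intro W g ρ; simp only [Fml.map, Str2.Sat]; rw [ih1, ih2]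
  | ex φ ih =>
      intro W g ρ
      simp only [Fml.map, Str2.Sat]
      apply exists_congr; intro m
      rw [ih]
      have : ((fun v => Option.elim v m ρ) ∘ Option.map g)
           = (fun v => Option.elim v m (ρ ∘ g)) := by
        funext v; cases v <;> rfl
      rw [this]
  | tc φ a b ih =>
      intro W g ρ
      simp only [Fml.map, Str2.Sat]
      have hrel :
          (fun x y => C.Sat (fun v => Option.elim v y (fun v' => Option.elim v' x ρ))
            (φ.map (Option.map (Option.map g))))
        = (fun x y => C.Sat
            (fun v => Option.elim v y (fun v' => Option.elim v' x (ρ ∘ g))) φ) := by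
        funext x y
        rw [eq_iff_iff, ih]
        have : ((fun v => Option.elim v y (fun v' => Option.elim v' x ρ)) ∘
            Option.map (Option.map g))
            = (fun v => Option.elim v y (fun v' => Option.elim v' x (ρ ∘ g))) := by
          funext v
          cases v with
          | none => rfl
          | some v' => cases v' <;> rfl
        rw [this]
      rw [hrel]
      exact Iff.rfl

lemma sat_and (C : Str2 σ) {V : Type} (ρ : V → C.U) (φ ψ : Fml σ V) :
    C.Sat ρ (φ.and ψ) ↔ C.Sat ρ φ ∧ C.Sat ρ ψ := by
  simp only [Fml.and, Str2.Sat]; tauto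

lemma sat_imp (C : Str2 σ) {V : Type} (ρ : V → C.U) (φ ψ : Fml σ V) :
    C.Sat ρ (φ.imp ψ) ↔ (C.Sat ρ φ → C.Sat ρ ψ) := by
  simp only [Fml.imp, Str2.Sat]; tauto

lemma sat_all (C : Str2 σ) {V : Type} (ρ : V → C.U) (φ : Fml σ (Option V)) :
    C.Sat ρ (Fml.all φ) ↔ ∀ m : C.U, C.Sat (fun v => Option.elim v m ρ) φ := by
  simp only [Fml.all, Str2.Sat, not_exists, not_not]

lemma sat_conj (C : Str2 σ) {V : Type} (ρ : V → C.U) (l : List (Fml σ V)) :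
    C.Sat ρ (Fml.conj l) ↔ ∀ φ ∈ l, C.Sat ρ φ := by
  induction l with
  | nil => simp [Fml.conj, Str2.Sat]
  | cons a l ih =>
      have : Fml.conj (a :: l) = a.and (Fml.conj l) := rfl
      rw [this, sat_and, ih]
      simp

lemma sat_disj (C : Str2 σ) {V : Type} (ρ : V → C.U) (l : List (Fml σ V)) :
    C.Sat ρ (Fml.disj l) ↔ ∃ φ ∈ l, C.Sat ρ φ := by
  induction l with
  | nil => simp [Fml.disj, Fml.fls, Str2.Sat]
  | cons a l ih =>
      have : Fml.disj (a :: l) = Fml.or a (Fml.disj l) := rfl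
      rw [this]
      show C.Sat ρ a ∨ C.Sat ρ (Fml.disj l) ↔ _
      rw [ih]
      simp

lemma sat_charFml (C : Str2 σ) {V : Type} (p : σ.rel) (ts : Fin (σ.ar p) → V)
    (B : TV) (ρ : V → C.U) :
    C.Sat ρ (charFml p ts B) ↔ TV.le (C.tv p (ρ ∘ ts)) B := by
  cases B with
  | zero =>
      simp only [charFml, Str2.Sat, Str2.tv, TV.le]
      by_cases h : C.ι p (ρ ∘ ts) = true <;> simp [h]
  | half => simp [charFml, Str2.Sat, TV.le]
  | one =>
      simp only [charFml, Str2.Sat, Str2.tv, TV.le]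
      by_cases h : C.ι p (ρ ∘ ts) = true <;> simp [h]

lemma lastCases_comp_eq {n : ℕ} {α : Type _} (ρ' : Fin (n + 1) → α) :
    (Fin.lastCases (ρ' (Fin.last n)) (ρ' ∘ Fin.castSucc) : Fin (n + 1) → α) = ρ' := by
  funext i
  induction i using Fin.lastCases with
  | last => simp
  | cast j => simp

lemma elim_comp_lastCases {n : ℕ} {α : Type _} (m : α) (ρ : Fin n → α) :
    ((fun v => Option.elim v m ρ) ∘
      fun i : Fin (n + 1) => Fin.lastCases none (fun j => some j) i)
      = (Fin.lastCases m ρ : Fin (n + 1) → α) := by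
  funext i
  induction i using Fin.lastCases with
  | last => simp
  | cast j => simp

lemma sat_closeAll (C : Str2 σ) :
    ∀ {n : ℕ} (φ : Fml σ (Fin n)) (ρ0 : Empty → C.U),
      C.Sat ρ0 (closeAll φ) ↔ ∀ ρ : Fin n → C.U, C.Sat ρ φ := by
  intro n
  induction n with
  | zero =>
      intro φ ρ0
      show C.Sat ρ0 (φ.map Fin.elim0) ↔ _
      rw [sat_map]
      constructor
      · intro h ρ
        have : ρ = ρ0 ∘ Fin.elim0 := by funext i; exact i.elim0
        rw [this]; exact h
      · intro h; exact h _
  | succ n ih =>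
      intro φ ρ0
      show C.Sat ρ0 (closeAll (Fml.all (φ.map _))) ↔ _
      rw [ih]
      constructor
      · intro h ρ'
        have h2 := (sat_all C _ _).mp (h (ρ' ∘ Fin.castSucc)) (ρ' (Fin.last n))
        rw [sat_map, elim_comp_lastCases, lastCases_comp_eq] at h2
        exact h2
      · intro h ρ
        rw [sat_all]
        intro m
        rw [sat_map, elim_comp_lastCases]
        exact h _

lemma sat_closeEx (C : Str2 σ) :
    ∀ {n : ℕ} (φ : Fml σ (Fin n)) (ρ0 : Empty → C.U),
      C.Sat ρ0 (closeEx φ) ↔ ∃ ρ : Fin n → C.U, C.Sat ρ φ := by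
  intro n
  induction n with
  | zero =>
      intro φ ρ0
      show C.Sat ρ0 (φ.map Fin.elim0) ↔ _
      rw [sat_map]
      constructor
      · intro h; exact ⟨_, h⟩
      · rintro ⟨ρ, hρ⟩
        have : ρ0 ∘ Fin.elim0 = ρ := by funext i; exact i.elim0
        rw [this]; exact hρ
  | succ n ih =>
      intro φ ρ0
      show C.Sat ρ0 (closeEx (Fml.ex (φ.map _))) ↔ _
      rw [ih]
      constructor
      · rintro ⟨ρ, m, hm⟩
        rw [sat_map, elim_comp_lastCases] at hm
        exact ⟨_, hm⟩
      · rintro ⟨ρ', hρ'⟩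
        refine ⟨ρ' ∘ Fin.castSucc, ρ' (Fin.last n), ?_⟩
        rw [sat_map, elim_comp_lastCases, lastCases_comp_eq]
        exact hρ'

lemma sat_nodeTuple (C : Str2 σ) (S : Str3 σ) (node : S.U → Fml σ Unit) {n : ℕ}
    (t : Fin n → S.U) (ρ : Fin n → C.U) :
    C.Sat ρ (nodeTuple S node t) ↔ ∀ j, C.Sat (fun _ => ρ j) (node (t j)) := by
  unfold nodeTuple
  rw [sat_conj]
  constructor
  · intro h j
    have := h _ (by
      rw [List.mem_ofFn]
      exact ⟨j, rfl⟩)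
    rwa [sat_map] at this
  · intro h φ hφ
    rw [List.mem_ofFn] at hφ
    obtain ⟨j, rfl⟩ := hφ
    rw [sat_map]
    exact h j

lemma sat_boundedNode [Fintype σ.rel] (C : Str2 σ) (S : Str3 σ) (uh : C.U) (u : S.U) :
    C.Sat (fun _ => uh) (boundedNode S u) ↔
      ∀ (p : σ.rel), σ.ar p = 1 →
        TV.le (C.tv p (fun _ => uh)) (S.ι p (fun _ => u)) := by
  unfold boundedNode
  rw [sat_conj]
  constructor
  · intro h p hp
    have := h _ (List.mem_map.mpr ⟨⟨p, hp⟩, by simp, rfl⟩)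
    rw [sat_charFml] at this
    exact this
  · intro h φ hφ
    rw [List.mem_map] at hφ
    obtain ⟨⟨p, hp⟩, -, rfl⟩ := hφ
    rw [sat_charFml]
    exact h p hp

lemma fin_eq_of_ar_one {m : ℕ} (hm : m = 1) (i j : Fin m) : i = j := by
  subst hm
  apply Fin.ext
  omega

lemma unary_val {C : Str2 σ} {S : Str3 σ} {blur : C.U → S.U} (h : IsCanonAbs C S blur)
    {p : σ.rel} (hp : σ.ar p = 1) (v : C.U) :
    S.ι p (fun _ => blur v) = C.tv p (fun _ => v) := by
  obtain ⟨hemb, hname, hjoin⟩ := h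
  have J := hjoin p (fun _ => blur v)
  apply TV.le_antisymm'
  · apply J.2
    rintro a ⟨t, hbt, rfl⟩
    have i : Fin (σ.ar p) := ⟨0, by omega⟩
    have ht : t = fun _ => t i := funext fun j => congrArg t (fin_eq_of_ar_one hp j i)
    have hbti : blur (t i) = blur v := congrFun hbt i
    have hι : C.ι p (fun _ => t i) = C.ι p (fun _ => v) := (hname (t i) v).mp hbti p hp
    have : C.tv p t = C.tv p (fun _ => v) := by
      rw [ht]; unfold Str2.tv; rw [hι]
    rw [this]
    exact TV.le_refl' _
  · exact J.1 _ ⟨fun _ => v, rfl, rfl⟩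

lemma canonNode_iff [Fintype σ.rel] {C : Str2 σ} {S : Str3 σ} {blur : C.U → S.U}
    (h : IsCanonAbs C S blur) (uh : C.U) (u : S.U) :
    blur uh = u ↔ C.Sat (fun _ => uh) (boundedNode S u) := by
  rw [sat_boundedNode]
  constructor
  · rintro rfl p hp
    exact h.1.2 p (fun _ => uh)
  · intro hsat
    obtain ⟨v, rfl⟩ := h.1.1 u
    apply (h.2.1 uh v).mpr
    intro p hp
    have h1 := hsat p hp
    rw [unary_val h hp v] at h1
    rcases h1 with h1 | h1
    · by_cases ha : C.ι p (fun _ => uh) = true <;>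
        by_cases hb : C.ι p (fun _ => v) = true <;>
        simp [Str2.tv, ha, hb] at h1 ⊢
    · exact absurd h1 (tv_ne_half C p _)

end Aux

/-- for every ICA structure `S` and 2-valued structure `C` with
`C ⊨ F` such that `S` is the canonical abstraction of `C`, `C` satisfies `τ^S`. -/
theorem canonAbs_sat_tau {σ : Voc} [Fintype σ.rel] (F : Fml σ Empty)
    (S : Str3 σ) [Fintype S.U] (hICA : ICA S) (C : Str2 σ) (hF : SatC C F)
    (blur : C.U → S.U) (h : IsCanonAbs C S blur) :
    SatC C (tau S (boundedNode S)) := by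
  classical
  have hemb : Embeds C S blur := h.1
  unfold tau SatC
  rw [sat_and]
  constructor
  · -- ξ^S
    unfold xi
    rw [sat_and]
    constructor
    · -- existsNode conjuncts
      rw [sat_conj]
      intro φ hφ
      rw [List.mem_map] at hφ
      obtain ⟨u, -, rfl⟩ := hφ
      obtain ⟨v, hv⟩ := hemb.1 u
      show ∃ m : C.U, _
      refine ⟨v, ?_⟩
      rw [sat_map]
      exact (canonNode_iff h v u).mp hv
    rw [sat_and]
    constructor
    · -- totality
      unfold xiTotal
      rw [sat_all]
      intro m
      rw [sat_disj]
      refine ⟨_, List.mem_map.mpr ⟨blur m, by simp, rfl⟩, ?_⟩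
      rw [sat_map]
      exact (canonNode_iff h m (blur m)).mp rfl
    rw [sat_and]
    constructor
    · -- nullary conjuncts
      unfold xiNullary
      rw [sat_conj]
      intro φ hφ
      rw [List.mem_map] at hφ
      obtain ⟨p, -, rfl⟩ := hφ
      by_cases h0 : σ.ar p = 0
      · rw [dif_pos h0, sat_charFml]
        have hv := hemb.2 p ((fun x : Empty => x.elim) ∘ fun i => Fin.elim0 (Fin.cast h0 i))
        have heq : blur ∘ ((fun x : Empty => x.elim) ∘ fun i => Fin.elim0 (Fin.cast h0 i))
            = (fun i => Fin.elim0 (Fin.cast h0 i)) := by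
          funext i; exact (Fin.cast h0 i).elim0
        rwa [heq] at hv
      · rw [dif_neg h0]
        trivial
    · -- predicate conjuncts of ξ
      unfold xiPredAll
      rw [sat_conj]
      intro φ hφ
      rw [List.mem_map] at hφ
      obtain ⟨p, -, rfl⟩ := hφ
      split
      · trivial
      · unfold xiPred
        rw [sat_closeAll]
        intro ρ
        rw [sat_conj]
        intro ψ hψ
        rw [List.mem_map] at hψ
        obtain ⟨t, -, rfl⟩ := hψ
        rw [sat_imp]
        intro hnt
        rw [sat_nodeTuple] at hnt
        have hb : blur ∘ ρ = t :=
          funext fun j => (canonNode_iff h (ρ j) (t j)).mpr (hnt j)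
        rw [sat_charFml]
        have hv := hemb.2 p ρ
        rw [hb] at hv
        exact hv
  · -- τ^S[p] conjuncts
    rw [sat_conj]
    intro φ hφ
    rw [List.mem_map] at hφ
    obtain ⟨p, -, rfl⟩ := hφ
    split
    · unfold tauPred
      rw [sat_conj]
      intro ψ hψ
      rw [List.mem_map] at hψ
      obtain ⟨t, ht, rfl⟩ := hψ
      rw [List.mem_filter] at ht
      have hhalf : S.ι p t = TV.half := of_decide_eq_true ht.2
      have J := h.2.2 p t
      have hex1 : ∃ s : Fin (σ.ar p) → C.U, blur ∘ s = t ∧ C.ι p s = true := by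
        by_contra hc
        push_neg at hc
        have hle : TV.le (S.ι p t) TV.zero := by
          apply J.2
          rintro a ⟨s, hs, rfl⟩
          have hfalse : C.ι p s = false := by
            cases hx : C.ι p s
            · rfl
            · exact absurd hx (hc s hs)
          left; simp [Str2.tv, hfalse]
        rw [hhalf] at hle
        rcases hle with h' | h' <;> simp at h'
      have hex0 : ∃ s : Fin (σ.ar p) → C.U, blur ∘ s = t ∧ C.ι p s = false := by
        by_contra hc
        push_neg at hc
        have hle : TV.le (S.ι p t) TV.one := by
          apply J.2
          rintro a ⟨s, hs, rfl⟩
          have htrue : C.ι p s = true := by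
            cases hx : C.ι p s
            · exact absurd hx (hc s hs)
            · rfl
          left; simp [Str2.tv, htrue]
        rw [hhalf] at hle
        rcases hle with h' | h' <;> simp at h'
      rw [sat_and]
      constructor
      · obtain ⟨s, hs, hps⟩ := hex1
        rw [sat_closeEx]
        refine ⟨s, ?_⟩
        rw [sat_and]
        constructor
        · rw [sat_nodeTuple]
          intro j
          exact (canonNode_iff h (s j) (t j)).mp (congrFun hs j)
        · show C.ι p (s ∘ fun j => j) = true
          exact hps
      · obtain ⟨s, hs, hps⟩ := hex0
        rw [sat_closeEx]
        refine ⟨s, ?_⟩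
        rw [sat_and]
        constructor
        · rw [sat_nodeTuple]
          intro j
          exact (canonNode_iff h (s j) (t j)).mp (congrFun hs j)
        · show ¬ C.ι p (s ∘ fun j => j) = true
          rw [show (s ∘ fun j => j) = s from rfl, hps]
          simp
    · trivial
end HeapAbs
end

section
/- For every 3-valued structure S (not necessarily FO-identifiable) and every 2-valued structure S♮: S♮ ∈ γ(S) if and only if S♮ ⊨ γ̂_NP(S), where γ̂_NP(S) = F ∧ ψ^S is the existential monadic second-order (NP) characteristic formula of S. -/
/-!
Common framework: 2-valued and 3-valued logical structures over a relational
vocabulary with a designated binary equality predicate, embedding, first-order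
formulas with transitive closure and their Tarskian semantics, characteristic
formulas, canonical abstraction.
-/

namespace HeapAbs

/-- for every 3-valued structure `S` (not necessarily
FO-identifiable) and every 2-valued structure `C`: `C ∈ γ(S)` iff
`C ⊨ γ̂_NP(S) = F ∧ ψ^S`, where `ψ^S` is the existential monadic second-order
(NP) characteristic formula of `S`. -/
theorem mem_gamma_iff_sat_gammaHatNP {σ : Voc} [Fintype σ.rel] (F : Fml σ Empty)
    (S : Str3 σ) [Fintype S.U] (C : Str2 σ) :
    C ∈ gammaSet F S ↔ (SatC C F ∧ SatNP S C) := by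
  constructor
  · rintro ⟨⟨f, hsurj, hemb⟩, hF⟩
    refine ⟨hF, fun u => {w | f w = u}, fun u => hsurj u, ?_, fun w => ⟨f w, rfl⟩, ?_, ?_⟩
    · intro u1 u2 hne w1 hw1 w2 hw2 heq
      rw [C.eq_iff] at heq
      subst heq
      exact hne (hw1.symm.trans hw2)
    · intro p h
      have key := hemb p (fun i => Fin.elim0 (Fin.cast h i))
      have : f ∘ (fun i => Fin.elim0 (Fin.cast h i)) =
          (fun i : Fin (σ.ar p) => Fin.elim0 (Fin.cast h i)) :=
        funext fun i => (Fin.cast h i).elim0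
      rwa [this] at key
    · intro p _ t us ht
      have : us = f ∘ t := funext fun j => (ht j).symm
      rw [this]
      exact hemb p t
  · rintro ⟨hF, V, hne, hdisj, hcov, hnull, hpred⟩
    have hf : ∀ w : C.U, w ∈ V (hcov w).choose := fun w => (hcov w).choose_spec
    set f : C.U → S.U := fun w => (hcov w).choose with hfdef
    have hun : ∀ (w : C.U) (u : S.U), w ∈ V u → f w = u := by
      intro w u hu
      by_contra hne'
      exact hdisj (f w) u hne' w (hf w) w hu ((C.eq_iff w w).mpr rfl)
    refine ⟨⟨f, ?_, ?_⟩, hF⟩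
    · intro u
      obtain ⟨w, hw⟩ := hne u
      exact ⟨w, hun w u hw⟩
    · intro r t
      by_cases h0 : σ.ar r = 0
      · have ht : t = fun i => Fin.elim0 (Fin.cast h0 i) :=
          funext fun i => absurd i.isLt (by omega)
        rw [ht]
        have hft : (f ∘ fun i => Fin.elim0 (Fin.cast h0 i)) =
            fun i : Fin (σ.ar r) => Fin.elim0 (Fin.cast h0 i) :=
          funext fun i => absurd i.isLt (by omega)
        rw [hft]
        exact hnull r h0
      · exact hpred r (by omega) t (f ∘ t) (fun j => hf (t j))
end HeapAbs
end

section
/- Let S be a 3-valued structure with nodes u1,...,un. Then every 2-valued structure S♮ with S♮ ⊨ γ̂_NP(S) satisfies S♮ ∈ γ(S); that is, S♮ ⊨ F and there exists a surjective embedding of S♮ into S. -/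
/-!
Common framework: 2-valued and 3-valued logical structures over a relational
vocabulary with a designated binary equality predicate, embedding, first-order
formulas with transitive closure and their Tarskian semantics, characteristic
formulas, canonical abstraction.
-/

namespace HeapAbs

/-- every 2-valued structure satisfying `γ̂_NP(S) = F ∧ ψ^S` is
in `γ(S)`: it satisfies `F` and embeds surjectively into `S`. -/
theorem sat_gammaHatNP_mem_gamma {σ : Voc} [Fintype σ.rel] (F : Fml σ Empty)
    (S : Str3 σ) [Fintype S.U] (C : Str2 σ)
    (h : SatC C F ∧ SatNP S C) :
    C ∈ gammaSet F S := by
  obtain ⟨hF, V, hne, hdisj, hcov, h0, h1⟩ := h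
  have huniq : ∀ w u1 u2, w ∈ V u1 → w ∈ V u2 → u1 = u2 := by
    intro w u1 u2 hw1 hw2
    by_contra hne'
    exact hdisj u1 u2 hne' w hw1 w hw2 ((C.eq_iff w w).mpr rfl)
  choose f hf using hcov
  refine ⟨⟨f, ?_, ?_⟩, hF⟩
  · intro u
    obtain ⟨w, hw⟩ := hne u
    exact ⟨w, huniq w (f w) u (hf w) hw⟩
  · intro r t
    rcases Nat.eq_zero_or_pos (σ.ar r) with hz | hp
    · have ht : t = fun i => Fin.elim0 (Fin.cast hz i) := by
        funext i; exact (Fin.cast hz i).elim0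
      rw [ht, show (f ∘ fun i => Fin.elim0 (Fin.cast hz i)) = fun i => Fin.elim0 (Fin.cast hz i)
        from funext fun i => (Fin.cast hz i).elim0]
      exact h0 r hz
    · exact h1 r hp t (f ∘ t) (fun j => hf (t j))
end HeapAbs
end

section
/- For every 3-valued structure S with nodes u1,...,un, and every 2-valued structure S♮ such that S♮ ⊨ F and S♮ embeds into S, S♮ satisfies the NP characteristic formula ψ^S. -/
/-!
Common framework: 2-valued and 3-valued logical structures over a relational
vocabulary with a designated binary equality predicate, embedding, first-order
formulas with transitive closure and their Tarskian semantics, characteristic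
formulas, canonical abstraction.
-/

namespace HeapAbs

/-- every 2-valued structure satisfying `F` that embeds into `S`
satisfies the NP characteristic formula `ψ^S`. -/
theorem embeds_sat_NP {σ : Voc} [Fintype σ.rel] (F : Fml σ Empty)
    (S : Str3 σ) [Fintype S.U] (C : Str2 σ)
    (hF : SatC C F) (hemb : ∃ f : C.U → S.U, Embeds C S f) :
    SatNP S C := by
  obtain ⟨f, hsurj, hle⟩ := hemb
  refine ⟨fun u => {w | f w = u}, fun u => hsurj u, ?_, fun w => ⟨f w, rfl⟩, ?_, ?_⟩
  · intro u1 u2 hne w1 h1 w2 h2 heq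
    exact hne (h1 ▸ h2 ▸ congrArg f ((C.eq_iff w1 w2).mp heq))
  · intro p h
    have := hle p (fun i => Fin.elim0 (Fin.cast h i))
    convert this using 2
    funext i
    exact (Fin.cast h i).elim0
  · intro p _ t us ht
    have := hle p t
    have hft : f ∘ t = us := funext ht
    rwa [hft] at this
end HeapAbs
end
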